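/- arXiv:2507.19453 — 2 statements merged into one kernel-verified Lean document; each statement's English description precedes it below -/
import Mathlib

section
/- Given a Szegő system, for every nonempty word σ ∈ F_d^+ one has φ_σ(0) = −γ_σ ∏_{τ ⪯ σ} d_τ^{−1}, where the (finite) product is over all words τ ∈ F_d^+ with τ ⪯ σ in the shortlex order. -/
open scoped BigOperators

/-- The shortlex (length-then-lexicographic) order on words in `F_d^+`. -/
def ShortlexLE {d : ℕ} (σ τ : List (Fin d)) : Prop :=
  σ.length < τ.length ∨ (σ.length = τ.length ∧ (σ = τ ∨ List.Lex (· < ·) σ τ))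

/-- The defect `d_σ := √(1 - |γ_σ|²)`. -/
noncomputable def defect {d : ℕ} (γ : List (Fin d) → ℂ) (σ : List (Fin d)) : ℝ :=
  Real.sqrt (1 - ‖γ σ‖ ^ 2)

/-- A Szegő system: Verblunsky coefficients `γ : F_d^+ → ℂ` with `γ_∅ = 0`, `|γ_σ| < 1`,
together with families of noncommutative polynomials `φ, φr (= φ^#)` with `φ_∅ = φ^#_∅ = 1`
satisfying the Szegő recurrences, where `e : ℕ ≃ F_d^+` is the shortlex order isomorphism and
`τ - 1 := e (e⁻¹ τ - 1)` is the immediate shortlex predecessor. -/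
structure SzegoSystem (d : ℕ) where
  /-- the shortlex enumeration of `F_d^+` -/
  e : ℕ ≃ List (Fin d)
  /-- `e` is an order isomorphism onto the shortlex order -/
  he : ∀ m n : ℕ, m ≤ n ↔ ShortlexLE (e m) (e n)
  /-- the Verblunsky coefficients -/
  γ : List (Fin d) → ℂ
  hγ0 : γ [] = 0
  hγlt : ∀ σ : List (Fin d), ‖γ σ‖ < 1
  /-- the orthonormal polynomials -/
  φ : List (Fin d) → FreeAlgebra ℂ (Fin d)
  /-- the reverse polynomials `φ^#` -/
  φr : List (Fin d) → FreeAlgebra ℂ (Fin d)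
  hφ0 : φ [] = 1
  hφr0 : φr [] = 1
  recφ : ∀ (k : Fin d) (σ : List (Fin d)),
    φ (k :: σ) = (((defect γ (k :: σ) : ℝ) : ℂ))⁻¹ •
      (FreeAlgebra.ι ℂ k * φ σ - γ (k :: σ) • φr (e (e.symm (k :: σ) - 1)))
  recφr : ∀ (k : Fin d) (σ : List (Fin d)),
    φr (k :: σ) = (((defect γ (k :: σ) : ℝ) : ℂ))⁻¹ •
      ((-(starRingEnd ℂ (γ (k :: σ)))) • (FreeAlgebra.ι ℂ k * φ σ) +
        φr (e (e.symm (k :: σ) - 1)))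

/-- Evaluation of a noncommutative polynomial at `0` (the constant coefficient). -/
noncomputable def evalZero (d : ℕ) : FreeAlgebra ℂ (Fin d) →ₐ[ℂ] ℂ :=
  FreeAlgebra.lift ℂ (fun _ : Fin d => (0 : ℂ))

/-- The shortlex-largest word of length `n`: the largest generator repeated `n` times. -/
def sigmaWord (d : ℕ) (hd : 1 ≤ d) (n : ℕ) : List (Fin d) :=
  List.replicate n (⟨d - 1, by omega⟩ : Fin d)

/-!
Every generator vanishes at `0`, so at `0` the Szegő recurrences for a nonempty word `τ` read
`φ^#_τ(0) = d_τ⁻¹ φ^#_{τ-1}(0)` and `φ_τ(0) = -γ_τ d_τ⁻¹ φ^#_{τ-1}(0) = -γ_τ φ^#_τ(0)`.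
Induction along the shortlex enumeration, starting from `φ^#_∅(0) = 1 = d_∅⁻¹` (as `γ_∅ = 0`),
gives `φ^#_τ(0) = ∏_{ρ ⪯ τ} d_ρ⁻¹`.
-/

lemma shortlexLE_nil_left {d : ℕ} (τ : List (Fin d)) : ShortlexLE [] τ := by
  cases τ with
  | nil => exact Or.inr ⟨rfl, Or.inl rfl⟩
  | cons a l => exact Or.inl (by simp)

@[simp]
lemma evalZero_ι {d : ℕ} (k : Fin d) : evalZero d (FreeAlgebra.ι ℂ k) = 0 := by
  simp [evalZero]

namespace SzegoSystem

variable {d : ℕ} (S : SzegoSystem d)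

lemma e_zero : S.e 0 = [] := by
  have h : S.e.symm [] ≤ 0 := (S.he _ 0).mpr (by simpa using shortlexLE_nil_left (S.e 0))
  rw [← Nat.le_zero.mp h, Equiv.apply_symm_apply]

lemma e_ne_nil {n : ℕ} (hn : n ≠ 0) : S.e n ≠ [] := by
  rw [← S.e_zero]
  exact S.e.injective.ne hn

lemma defect_nil : defect S.γ [] = 1 := by
  simp [defect, S.hγ0]

lemma evalZero_φr_cons (k : Fin d) (σ : List (Fin d)) :
    evalZero d (S.φr (k :: σ)) =
      (((defect S.γ (k :: σ) : ℝ) : ℂ))⁻¹ *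
        evalZero d (S.φr (S.e (S.e.symm (k :: σ) - 1))) := by
  simp [S.recφr]

lemma evalZero_φr_e (n : ℕ) :
    evalZero d (S.φr (S.e n)) =
      ∏ j ∈ Finset.range (n + 1), (((defect S.γ (S.e j) : ℝ) : ℂ))⁻¹ := by
  induction n with
  | zero => simp [e_zero, defect_nil, S.hφr0]
  | succ n ih =>
    obtain ⟨k, σ, hkσ⟩ := List.ne_nil_iff_exists_cons.mp (S.e_ne_nil n.add_one_ne_zero)
    rw [hkσ, evalZero_φr_cons, ← hkσ, Equiv.symm_apply_apply, Nat.add_sub_cancel_right, ih,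
      Finset.prod_range_succ _ (n + 1), mul_comm]

lemma evalZero_φ_eq_neg_γ_mul {σ : List (Fin d)} (hσ : σ ≠ []) :
    evalZero d (S.φ σ) = -S.γ σ * evalZero d (S.φr σ) := by
  obtain ⟨k, τ, rfl⟩ := List.ne_nil_iff_exists_cons.mp hσ
  rw [S.recφ, evalZero_φr_cons]
  simp only [map_smul, map_sub, map_mul, evalZero_ι, zero_mul, zero_sub, smul_eq_mul]
  ring

end SzegoSystem

theorem orthonormal_poly_at_zero_general {d : ℕ} (S : SzegoSystem d)
    (σ : List (Fin d)) (hσ : σ ≠ []) :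
    evalZero d (S.φ σ) =
      -S.γ σ * ∏ j ∈ Finset.range (S.e.symm σ + 1), (((defect S.γ (S.e j) : ℝ) : ℂ))⁻¹ := by
  rw [S.evalZero_φ_eq_neg_γ_mul hσ, ← S.evalZero_φr_e, Equiv.apply_symm_apply]

/-- for every nonempty word `σ ∈ F_d^+`,
`φ_σ(0) = −γ_σ ∏_{τ ⪯ σ} d_τ⁻¹`, the product over all words `τ ⪯ σ` in the shortlex order
(enumerated by `e`). -/
theorem orthonormal_poly_at_zero {d : ℕ} (hd : 1 ≤ d) (S : SzegoSystem d)
    (σ : List (Fin d)) (hσ : σ ≠ []) :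
    evalZero d (S.φ σ) =
      -S.γ σ * ∏ j ∈ Finset.range (S.e.symm σ + 1), (((defect S.γ (S.e j) : ℝ) : ℂ))⁻¹ :=
  orthonormal_poly_at_zero_general S σ hσ
end

section
/- Given a Szegő system, fix n ∈ ℕ and let Z = (Z_1,…,Z_d) be a d-tuple of m×m complex matrices with (Z_1 Z_1^* + ⋯ + Z_d Z_d^*) − I_m positive definite (i.e. Z lies in the exterior Ext of the closed row-ball). Then ∑_{σ : |σ| = n} φ_σ(Z^*)^* φ_σ(Z^*) is positive definite, where Z^* := (Z_1^*,…,Z_d^*) and the sum is over all words of length n; in particular det(∑_{|σ| = n} φ_σ(Z^*)^* φ_σ(Z^*)) ≠ 0. -/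
open scoped BigOperators ComplexOrder

/-- Evaluation of a noncommutative polynomial at a `d`-tuple of `m×m` matrices. -/
noncomputable def evalM {d m : ℕ} (A : Fin d → Matrix (Fin m) (Fin m) ℂ) :
    FreeAlgebra ℂ (Fin d) →ₐ[ℂ] Matrix (Fin m) (Fin m) ℂ :=
  FreeAlgebra.lift ℂ A

/-!
Evaluate at `Z^*` and write `S_n = ∑_{|σ| = n} φ_σ^* φ_σ`. The Szegő recurrence preserves the
indefinite form `φ^* φ - φ^{#*} φ^#`, so
`φ_{kσ}^* φ_{kσ} - φ^#_{kσ}^* φ^#_{kσ} = (Z_k^* φ_σ)^* (Z_k^* φ_σ) - φ^#_{kσ-1}^* φ^#_{kσ-1}`.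
Summed over the words of length `n + 1`, which form an interval of the shortlex enumeration, the
`φ^#` terms telescope:
`S_{n+1} = ∑_{|σ| = n} φ_σ^* (∑_k Z_k Z_k^*) φ_σ + R_{n+1} - R_n` with
`R_n = φ^#_{σ(n)}^* φ^#_{σ(n)}`.
Induction on `n` then shows at once that `S_n` is positive definite and that
`S_n - R_n` is positive semidefinite: the increment
`∑_σ φ_σ^* (∑_k Z_k Z_k^* - 1) φ_σ` is positive definite because `S_n` is.
-/

open Finset Matrix ComplexConjugate

theorem List.lex_lt_replicate_of_forall_le {α : Type*} [PartialOrder α] {t : α}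
    (ht : ∀ a, a ≤ t) {n : ℕ} {w : List α} (hw : w.length = n) (hne : w ≠ replicate n t) :
    List.Lex (· < ·) w (replicate n t) := by
  induction w generalizing n with
  | nil => subst hw; exact absurd rfl hne
  | cons a w ih =>
    obtain ⟨n, rfl⟩ : ∃ k, n = k + 1 := ⟨w.length, hw.symm⟩
    rw [replicate_succ] at hne ⊢
    rcases (ht a).lt_or_eq with hlt | rfl
    · exact .rel hlt
    · exact .cons (ih (by simpa using hw) fun h => hne (by rw [h]))

theorem Finset.sum_Ioc_sub_pred {M : Type*} [AddCommGroup M] (f : ℕ → M) {a b : ℕ}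
    (hab : a ≤ b) : ∑ x ∈ Ioc a b, (f x - f (x - 1)) = f b - f a := by
  induction b, hab using Nat.le_induction with
  | base => simp
  | succ b hb ih => rw [sum_Ioc_succ_top hb, ih, Nat.add_sub_cancel]; abel

-- The coefficient matrix `c⁻¹ [[1, -g], [-conj g, 1]]` is `J`-unitary for `J = diag(1, -1)`.
theorem star_mul_self_sub_star_mul_self_szegoStep {A : Type*} [Ring A] [StarRing A]
    [Algebra ℂ A] [StarModule ℂ A] {c : ℝ} (hc : c ≠ 0) {g : ℂ} (hcg : c ^ 2 = 1 - ‖g‖ ^ 2)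
    (u v : A) :
    star ((c : ℂ)⁻¹ • (u - g • v)) * ((c : ℂ)⁻¹ • (u - g • v)) -
        star ((c : ℂ)⁻¹ • (-conj g • u + v)) * ((c : ℂ)⁻¹ • (-conj g • u + v)) =
      star u * u - star v * v := by
  have hscalar : (c : ℂ)⁻¹ * (c : ℂ)⁻¹ * (1 - g * conj g) = 1 := by
    rw [Complex.mul_conj, Complex.normSq_eq_norm_sq]
    have : (c : ℂ) ≠ 0 := by exact_mod_cast hc
    field_simp
    exact_mod_cast hcg.symm
  simp only [star_smul, star_sub, star_add, star_neg, sub_mul, mul_sub, add_mul, mul_add,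
    smul_smul, smul_sub, smul_add, smul_mul_assoc, mul_smul_comm, neg_smul, smul_neg, neg_mul,
    mul_neg]
  match_scalars <;>
    simp only [RCLike.star_def, map_mul, map_inv₀, Complex.conj_conj, Complex.conj_ofReal] <;>
    first | ring1 | linear_combination hscalar | linear_combination -hscalar

theorem Matrix.PosDef.sum_conjTranspose_mul_mul {𝕜 m n ι : Type*} [RCLike 𝕜] [Fintype m]
    [Fintype n] [Fintype ι] {P : Matrix n n 𝕜} (hP : P.PosDef) (B : ι → Matrix n m 𝕜)
    (hB : (∑ i, (B i)ᴴ * B i).PosDef) : (∑ i, (B i)ᴴ * P * B i).PosDef := by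
  have hterm (i : ι) := hP.posSemidef.conjTranspose_mul_mul_same (B i)
  refine .of_dotProduct_mulVec_pos (posSemidef_sum _ fun i _ => hterm i).isHermitian
    fun x hx => ?_
  obtain ⟨i, hi⟩ : ∃ i, B i *ᵥ x ≠ 0 := by
    by_contra! h
    simpa [sum_mulVec, ← mulVec_mulVec, h] using hB.dotProduct_mulVec_pos hx
  rw [sum_mulVec, dotProduct_sum]
  refine sum_pos' (fun j _ => (hterm j).dotProduct_mulVec_nonneg x) ⟨i, mem_univ _, ?_⟩
  simpa [star_mulVec, dotProduct_mulVec, vecMul_vecMul,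
    ← mulVec_mulVec] using hP.dotProduct_mulVec_pos hi

theorem shortlexLE_sigmaWord_iff {d : ℕ} (hd : 1 ≤ d) (w : List (Fin d)) (n : ℕ) :
    ShortlexLE w (sigmaWord d hd n) ↔ w.length ≤ n := by
  have hlen : (sigmaWord d hd n).length = n := List.length_replicate ..
  refine ⟨by rintro (h | ⟨h, -⟩) <;> omega, fun h => ?_⟩
  rcases h.lt_or_eq with h | h
  · exact .inl (by omega)
  refine .inr ⟨by omega, or_iff_not_imp_left.2 fun hne => ?_⟩
  exact List.lex_lt_replicate_of_forall_le (fun a => Fin.le_def.2 (by simp; omega)) h hne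

section ShortlexEnumeration

variable {d : ℕ} {e : ℕ ≃ List (Fin d)} (hd : 1 ≤ d)

theorem le_symm_sigmaWord_iff (he : ∀ m n, m ≤ n ↔ ShortlexLE (e m) (e n)) (x n : ℕ) :
    x ≤ e.symm (sigmaWord d hd n) ↔ (e x).length ≤ n := by
  rw [he, e.apply_symm_apply, shortlexLE_sigmaWord_iff]

theorem mem_Ioc_symm_sigmaWord_iff (he : ∀ m n, m ≤ n ↔ ShortlexLE (e m) (e n)) (x n : ℕ) :
    x ∈ Ioc (e.symm (sigmaWord d hd n)) (e.symm (sigmaWord d hd (n + 1))) ↔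
      (e x).length = n + 1 := by
  rw [mem_Ioc, ← not_le, le_symm_sigmaWord_iff hd he, le_symm_sigmaWord_iff hd he]
  omega

theorem sum_ofFn_eq_sum_Ioc (he : ∀ m n, m ≤ n ↔ ShortlexLE (e m) (e n)) {M : Type*}
    [AddCommMonoid M] (F : List (Fin d) → M) (n : ℕ) :
    ∑ f : Fin (n + 1) → Fin d, F (List.ofFn f) =
      ∑ x ∈ Ioc (e.symm (sigmaWord d hd n)) (e.symm (sigmaWord d hd (n + 1))), F (e x) := by
  refine sum_nbij (fun f => e.symm (List.ofFn f)) (fun f _ => ?_) ?_ (fun x hx => ?_) ?_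
  · simp [mem_Ioc_symm_sigmaWord_iff hd he]
  · exact fun f _ g _ h => List.ofFn_injective (e.symm.injective h)
  · have hx : (e x).length = n + 1 := (mem_Ioc_symm_sigmaWord_iff hd he x n).1 hx
    have hofFn := List.ofFn_congr hx fun i => (e x)[(i : ℕ)]
    rw [List.ofFn_getElem] at hofFn
    exact ⟨_, mem_univ _, (congrArg e.symm hofFn.symm).trans (e.symm_apply_apply x)⟩
  · simp

theorem sum_ofFn_sub_pred (he : ∀ m n, m ≤ n ↔ ShortlexLE (e m) (e n)) {M : Type*}
    [AddCommGroup M] (G : List (Fin d) → M) (n : ℕ) :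
    ∑ f : Fin (n + 1) → Fin d, (G (List.ofFn f) - G (e (e.symm (List.ofFn f) - 1))) =
      G (sigmaWord d hd (n + 1)) - G (sigmaWord d hd n) := by
  have hmono : e.symm (sigmaWord d hd n) ≤ e.symm (sigmaWord d hd (n + 1)) := by
    rw [le_symm_sigmaWord_iff hd he, e.apply_symm_apply, sigmaWord, List.length_replicate]
    omega
  rw [sum_ofFn_eq_sum_Ioc hd he (fun w => G w - G (e (e.symm w - 1)))]
  simp only [e.symm_apply_apply]
  rw [sum_Ioc_sub_pred (fun x => G (e x)) hmono, e.apply_symm_apply, e.apply_symm_apply]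

end ShortlexEnumeration

namespace SzegoSystem

variable {d : ℕ} (S : SzegoSystem d)

theorem defect_sq (σ : List (Fin d)) : defect S.γ σ ^ 2 = 1 - ‖S.γ σ‖ ^ 2 :=
  Real.sq_sqrt (by nlinarith [S.hγlt σ, norm_nonneg (S.γ σ)])

theorem defect_pos (σ : List (Fin d)) : 0 < defect S.γ σ :=
  Real.sqrt_pos.2 (by nlinarith [S.hγlt σ, norm_nonneg (S.γ σ)])

section StarAlgebra

variable {A : Type*} [Ring A] [StarRing A] [Algebra ℂ A] [StarModule ℂ A]
  (ψ : FreeAlgebra ℂ (Fin d) →ₐ[ℂ] A)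

noncomputable def sqSum (n : ℕ) : A :=
  ∑ f : Fin n → Fin d, star (ψ (S.φ (List.ofFn f))) * ψ (S.φ (List.ofFn f))

noncomputable def reverseSq (w : List (Fin d)) : A :=
  star (ψ (S.φr w)) * ψ (S.φr w)

theorem star_mul_self_φ_cons_sub_reverseSq (k : Fin d) (σ : List (Fin d)) :
    star (ψ (S.φ (k :: σ))) * ψ (S.φ (k :: σ)) - S.reverseSq ψ (k :: σ) =
      star (ψ (FreeAlgebra.ι ℂ k) * ψ (S.φ σ)) * (ψ (FreeAlgebra.ι ℂ k) * ψ (S.φ σ)) -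
        S.reverseSq ψ (S.e (S.e.symm (k :: σ) - 1)) := by
  rw [reverseSq, reverseSq, S.recφ, S.recφr]
  simp only [map_smul, map_sub, map_add, map_mul]
  exact star_mul_self_sub_star_mul_self_szegoStep (S.defect_pos _).ne' (S.defect_sq _) _ _

theorem sqSum_succ (hd : 1 ≤ d) (n : ℕ) :
    S.sqSum ψ (n + 1) =
      ∑ f : Fin n → Fin d, star (ψ (S.φ (List.ofFn f))) *
          ((∑ k, star (ψ (FreeAlgebra.ι ℂ k)) * ψ (FreeAlgebra.ι ℂ k)) * ψ (S.φ (List.ofFn f))) +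
        (S.reverseSq ψ (sigmaWord d hd (n + 1)) - S.reverseSq ψ (sigmaWord d hd n)) := by
  have hcons (f : Fin (n + 1) → Fin d) :
      star (ψ (S.φ (List.ofFn f))) * ψ (S.φ (List.ofFn f)) =
        star (ψ (FreeAlgebra.ι ℂ (f 0)) * ψ (S.φ (List.ofFn (Fin.tail f)))) *
            (ψ (FreeAlgebra.ι ℂ (f 0)) * ψ (S.φ (List.ofFn (Fin.tail f)))) +
          (S.reverseSq ψ (List.ofFn f) - S.reverseSq ψ (S.e (S.e.symm (List.ofFn f) - 1))) := by
    rw [List.ofFn_succ]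
    exact eq_add_of_sub_eq'
      (sub_eq_sub_iff_sub_eq_sub.1 (S.star_mul_self_φ_cons_sub_reverseSq ψ _ _))
  rw [sqSum, sum_congr rfl fun f _ => hcons f, sum_add_distrib,
    sum_ofFn_sub_pred hd S.he (S.reverseSq ψ)]
  congr 1
  rw [← (Fin.consEquiv fun _ => Fin d).sum_comp, Fintype.sum_prod_type_right]
  refine sum_congr rfl fun g _ => ?_
  simp [Fin.consEquiv, Fin.tail_cons, sum_mul, mul_sum, mul_assoc]

end StarAlgebra

variable {ι : Type*} [Fintype ι] [DecidableEq ι] (ψ : FreeAlgebra ℂ (Fin d) →ₐ[ℂ] Matrix ι ι ℂ)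

theorem posDef_sqSum_and_posSemidef_sub_reverseSq (hd : 1 ≤ d)
    (hψ : ((∑ k, star (ψ (FreeAlgebra.ι ℂ k)) * ψ (FreeAlgebra.ι ℂ k)) - 1).PosDef) (n : ℕ) :
    (S.sqSum ψ n).PosDef ∧ (S.sqSum ψ n - S.reverseSq ψ (sigmaWord d hd n)).PosSemidef := by
  induction n with
  | zero =>
    have hsq : S.sqSum ψ 0 = 1 := by simp [sqSum, S.hφ0]
    have hrev : S.reverseSq ψ (sigmaWord d hd 0) = 1 := by simp [reverseSq, sigmaWord, S.hφr0]
    rw [hsq, hrev, sub_self]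
    exact ⟨.one, .zero⟩
  | succ n ih =>
    set Q := ∑ k, star (ψ (FreeAlgebra.ι ℂ k)) * ψ (FreeAlgebra.ι ℂ k)
    have hsplit : S.sqSum ψ (n + 1) - S.reverseSq ψ (sigmaWord d hd (n + 1)) =
        ∑ f : Fin n → Fin d, star (ψ (S.φ (List.ofFn f))) * ((Q - 1) * ψ (S.φ (List.ofFn f))) +
          (S.sqSum ψ n - S.reverseSq ψ (sigmaWord d hd n)) := by
      rw [sqSum_succ S ψ hd, sqSum]
      simp only [sub_mul, mul_sub, one_mul, sum_sub_distrib]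
      abel
    have hgain : (∑ f : Fin n → Fin d,
        star (ψ (S.φ (List.ofFn f))) * ((Q - 1) * ψ (S.φ (List.ofFn f)))).PosDef := by
      have h := hψ.sum_conjTranspose_mul_mul _ ih.1
      simp only [Matrix.mul_assoc] at h
      exact h
    refine ⟨?_, hsplit ▸ hgain.posSemidef.add ih.2⟩
    rw [← sub_add_cancel (S.sqSum ψ (n + 1)) (S.reverseSq ψ _), hsplit]
    exact (hgain.add_posSemidef ih.2).add_posSemidef (posSemidef_conjTranspose_mul_self _)

end SzegoSystem

theorem orthonormal_poly_no_zeros_outside_general {d m : ℕ} (hd : 1 ≤ d)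
    (S : SzegoSystem d) (n : ℕ) (Z : Fin d → Matrix (Fin m) (Fin m) ℂ)
    (hZ : ((∑ k : Fin d, Z k * star (Z k)) - (1 : Matrix (Fin m) (Fin m) ℂ)).PosDef) :
    (∑ f : Fin n → Fin d,
        star (evalM (fun j => star (Z j)) (S.φ (List.ofFn f))) *
          evalM (fun j => star (Z j)) (S.φ (List.ofFn f))).PosDef ∧
      (∑ f : Fin n → Fin d,
        star (evalM (fun j => star (Z j)) (S.φ (List.ofFn f))) *
          evalM (fun j => star (Z j)) (S.φ (List.ofFn f))).det ≠ 0 := by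
  have hQ : ∑ k, star (evalM (fun j => star (Z j)) (FreeAlgebra.ι ℂ k)) *
      evalM (fun j => star (Z j)) (FreeAlgebra.ι ℂ k) = ∑ k, Z k * star (Z k) := by
    simp [evalM]
  have hpos := (S.posDef_sqSum_and_posSemidef_sub_reverseSq _ hd (hQ ▸ hZ) n).1
  exact ⟨hpos, hpos.det_pos.ne'⟩

/-- if `(∑_k Z_k Z_k^*) − I` is positive definite (i.e. `Z` lies in the exterior
of the closed row-ball), then `∑_{|σ| = n} φ_σ(Z^*)^* φ_σ(Z^*)` is positive definite; in
particular its determinant is nonzero. -/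
theorem orthonormal_poly_no_zeros_outside {d m : ℕ} (hd : 1 ≤ d) (hm : 1 ≤ m)
    (S : SzegoSystem d) (n : ℕ) (Z : Fin d → Matrix (Fin m) (Fin m) ℂ)
    (hZ : ((∑ k : Fin d, Z k * star (Z k)) - (1 : Matrix (Fin m) (Fin m) ℂ)).PosDef) :
    (∑ f : Fin n → Fin d,
        star (evalM (fun j => star (Z j)) (S.φ (List.ofFn f))) *
          evalM (fun j => star (Z j)) (S.φ (List.ofFn f))).PosDef ∧
      (∑ f : Fin n → Fin d,
        star (evalM (fun j => star (Z j)) (S.φ (List.ofFn f))) *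
          evalM (fun j => star (Z j)) (S.φ (List.ofFn f))).det ≠ 0 :=
  orthonormal_poly_no_zeros_outside_general hd S n Z hZ
end
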